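/- Let C ⊆ ℝⁿ be a full-dimensional pointed polyhedral cone with polar cone C^∨ = {y : ⟨y,x⟩ ≥ 0 for all x ∈ C}, and assume C ⊆ C^∨. Let W ⊆ C be a compact set not contained in any proper face of C. Then K = {x ∈ C : ⟨w,x⟩ ≤ 1 for all w ∈ W} is a bounded C-anti-blocking body, and for every c ∈ C there exists μ > 0 with μc ∈ K. -/

import Mathlib

open Set MeasureTheory Pointwise
open scoped RealInnerProductSpace

/-- The polar (dual) cone `C^∨ = {y : ⟪x, y⟫ ≥ 0 for all x ∈ C}`. -/
def dualCone {n : ℕ} (C : Set (EuclideanSpace ℝ (Fin n))) :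
    Set (EuclideanSpace ℝ (Fin n)) :=
  {y | ∀ x ∈ C, 0 ≤ ⟪x, y⟫}

/-- A polyhedral cone: a finite intersection of linear halfspaces. -/
def IsPolyhedralCone {n : ℕ} (C : Set (EuclideanSpace ℝ (Fin n))) : Prop :=
  ∃ s : Finset (EuclideanSpace ℝ (Fin n)), C = {x | ∀ w ∈ s, 0 ≤ ⟪w, x⟫}

/-! A nonzero `x ∈ C` cannot be orthogonal to all of `W`: by `C ⊆ C^∨` it would define a face
`x^⊥ ∩ C` containing `W`, hence all of `C`, so `⟪x, x⟫ = 0`. Compactness of the unit sphere of the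
closed cone `C` makes this positivity uniform, `m ‖x‖ ≤ ⟪w, x⟫` for some `w ∈ W`, which bounds `K`.
Anti-blocking is immediate from `W ⊆ C`, and `μ c ∈ K` for small `μ` because `W` is bounded. -/

theorem IsCompact.exists_pos_forall_exists_le {X ι : Type*} [TopologicalSpace X] {S : Set X}
    (hS : IsCompact S) {f : ι → X → ℝ} (hf : ∀ i, Continuous (f i))
    (hpos : ∀ x ∈ S, ∃ i, 0 < f i x) : ∃ m > 0, ∀ x ∈ S, ∃ i, m ≤ f i x := by
  let U : ℕ → Set X := fun k => ⋃ i, {x | 1 / ((k : ℝ) + 1) < f i x}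
  have hU_open : ∀ k, IsOpen (U k) := fun k =>
    isOpen_iUnion fun i => isOpen_lt continuous_const (hf i)
  have hU_cover : S ⊆ ⋃ k, U k := fun x hx => by
    obtain ⟨i, hi⟩ := hpos x hx
    obtain ⟨k, hk⟩ := exists_nat_one_div_lt hi
    exact mem_iUnion.2 ⟨k, mem_iUnion.2 ⟨i, hk⟩⟩
  have hU_mono : Monotone U := fun k l hkl => iUnion_mono fun i x (hx : _ < _) =>
    (one_div_le_one_div_of_le (by positivity) (by gcongr) : 1 / ((l : ℝ) + 1) ≤ _).trans_lt hx
  obtain ⟨k, hk⟩ := hS.elim_directed_cover U hU_open hU_cover hU_mono.directed_le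
  refine ⟨1 / ((k : ℝ) + 1), by positivity, fun x hx => ?_⟩
  obtain ⟨i, hi⟩ := mem_iUnion.1 (hk hx)
  exact ⟨i, hi.le⟩

section InnerProductSpace

variable {E : Type*} [NormedAddCommGroup E] [InnerProductSpace ℝ E] {C W : Set E}

theorem exists_pos_forall_mul_norm_le_inner [ProperSpace E] (hC : IsClosed C)
    (hcone : ∀ x ∈ C, ∀ t : ℝ, 0 ≤ t → t • x ∈ C)
    (hpos : ∀ x ∈ C, x ≠ 0 → ∃ w ∈ W, 0 < ⟪w, x⟫) :
    ∃ m > 0, ∀ x ∈ C, x ≠ 0 → ∃ w ∈ W, m * ‖x‖ ≤ ⟪w, x⟫ := by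
  have hS : IsCompact (C ∩ Metric.sphere 0 1) := (isCompact_sphere 0 1).inter_left hC
  obtain ⟨m, hm, hmS⟩ := hS.exists_pos_forall_exists_le (f := fun (w : W) x => ⟪(w : E), x⟫)
    (fun w => continuous_const.inner continuous_id) fun u ⟨huC, hu⟩ => by
      obtain ⟨w, hw, hwu⟩ := hpos u huC (ne_zero_of_mem_unit_sphere ⟨u, hu⟩)
      exact ⟨⟨w, hw⟩, hwu⟩
  refine ⟨m, hm, fun x hxC hx => ?_⟩
  have hnx : 0 < ‖x‖ := norm_pos_iff.2 hx
  have hu : ‖x‖⁻¹ • x ∈ C ∩ Metric.sphere 0 1 :=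
    ⟨hcone x hxC _ (inv_nonneg.2 hnx.le), by simp [norm_smul, hnx.ne']⟩
  obtain ⟨⟨w, hw⟩, hwu⟩ := hmS _ hu
  refine ⟨w, hw, ?_⟩
  rw [inner_smul_right, inv_mul_eq_div, le_div_iff₀ hnx] at hwu
  linarith

theorem isBounded_setOf_inner_le_one [ProperSpace E] (hC : IsClosed C)
    (hcone : ∀ x ∈ C, ∀ t : ℝ, 0 ≤ t → t • x ∈ C)
    (hpos : ∀ x ∈ C, x ≠ 0 → ∃ w ∈ W, 0 < ⟪w, x⟫) :
    Bornology.IsBounded {x ∈ C | ∀ w ∈ W, ⟪w, x⟫ ≤ 1} := by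
  obtain ⟨m, hm, hmC⟩ := exists_pos_forall_mul_norm_le_inner hC hcone hpos
  refine (Metric.isBounded_closedBall (x := (0 : E)) (r := m⁻¹)).subset fun x ⟨hxC, hxW⟩ => ?_
  rw [Metric.mem_closedBall, dist_zero_right, ← one_div, le_div_iff₀ hm]
  rcases eq_or_ne x 0 with rfl | hx
  · simp
  · obtain ⟨w, hw, hwx⟩ := hmC x hxC hx
    linarith [hxW w hw]

theorem exists_pos_smul_mem_setOf_inner_le_one (hcone : ∀ x ∈ C, ∀ t : ℝ, 0 ≤ t → t • x ∈ C)
    (hW : Bornology.IsBounded W) {c : E} (hc : c ∈ C) :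
    ∃ μ : ℝ, 0 < μ ∧ μ • c ∈ {x ∈ C | ∀ w ∈ W, ⟪w, x⟫ ≤ 1} := by
  obtain ⟨R, hR0, hR⟩ := hW.exists_pos_norm_le
  have hM : 0 < R * ‖c‖ + 1 := by positivity
  refine ⟨(R * ‖c‖ + 1)⁻¹, inv_pos.2 hM, hcone c hc _ (inv_pos.2 hM).le, fun w hw => ?_⟩
  have hwc : ⟪w, c⟫ ≤ R * ‖c‖ + 1 := calc
    ⟪w, c⟫ ≤ ‖w‖ * ‖c‖ := real_inner_le_norm w c
    _ ≤ R * ‖c‖ := by gcongr; exact hR w hw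
    _ ≤ R * ‖c‖ + 1 := by linarith
  rw [inner_smul_right, inv_mul_le_iff₀ hM, mul_one]
  exact hwc

end InnerProductSpace

section EuclideanSpace

variable {n : ℕ} {C W : Set (EuclideanSpace ℝ (Fin n))}

theorem IsPolyhedralCone.isClosed (hC : IsPolyhedralCone C) : IsClosed C := by
  obtain ⟨s, rfl⟩ := hC
  simp only [ofPred_forall]
  exact isClosed_biInter fun w _ => isClosed_le continuous_const (continuous_const.inner continuous_id)

theorem IsPolyhedralCone.smul_mem (hC : IsPolyhedralCone C) :
    ∀ x ∈ C, ∀ t : ℝ, 0 ≤ t → t • x ∈ C := by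
  obtain ⟨s, rfl⟩ := hC
  intro x hx t ht w hw
  rw [inner_smul_right]
  exact mul_nonneg ht (hx w hw)

theorem exists_pos_inner_of_forall_face_eq (hCC : C ⊆ dualCone C) (hWC : W ⊆ C)
    (hWface : ∀ u ∈ dualCone C, (∀ w ∈ W, ⟪u, w⟫ = 0) → ∀ x ∈ C, ⟪u, x⟫ = 0) :
    ∀ x ∈ C, x ≠ 0 → ∃ w ∈ W, 0 < ⟪w, x⟫ := by
  intro x hx hx0
  by_contra! hW
  have hxW : ∀ w ∈ W, ⟪x, w⟫ = 0 := fun w hw =>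
    real_inner_comm w x ▸ le_antisymm (hW w hw) (hCC hx w (hWC hw))
  exact hx0 (inner_self_eq_zero.1 (hWface x (hCC hx) hxW x hx))

theorem mem_setOf_inner_le_one_of_sub_mem_dualCone (hWC : W ⊆ C)
    {x y : EuclideanSpace ℝ (Fin n)} (hy : y ∈ {x ∈ C | ∀ w ∈ W, ⟪w, x⟫ ≤ 1}) (hx : x ∈ C)
    (hyx : y - x ∈ dualCone C) : x ∈ {x ∈ C | ∀ w ∈ W, ⟪w, x⟫ ≤ 1} := by
  refine ⟨hx, fun w hw => ?_⟩
  have h := hyx w (hWC hw)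
  rw [inner_sub_right] at h
  linarith [hy.2 w hw]

end EuclideanSpace

theorem polyhedral_Cab_representation_general {n : ℕ}
    {C W : Set (EuclideanSpace ℝ (Fin n))}
    (hpoly : IsPolyhedralCone C)
    (hCC : C ⊆ dualCone C)
    (hWC : W ⊆ C) (hWcomp : IsCompact W)
    (hWface : ∀ u ∈ dualCone C, (∀ w ∈ W, ⟪u, w⟫ = 0) → ∀ x ∈ C, ⟪u, x⟫ = 0) :
    Bornology.IsBounded {x ∈ C | ∀ w ∈ W, ⟪w, x⟫ ≤ 1} ∧
      (∀ y ∈ {x ∈ C | ∀ w ∈ W, ⟪w, x⟫ ≤ 1}, ∀ x ∈ C,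
        y - x ∈ dualCone C → x ∈ {x ∈ C | ∀ w ∈ W, ⟪w, x⟫ ≤ 1}) ∧
      ∀ c ∈ C, ∃ μ : ℝ, 0 < μ ∧ μ • c ∈ {x ∈ C | ∀ w ∈ W, ⟪w, x⟫ ≤ 1} :=
  ⟨isBounded_setOf_inner_le_one hpoly.isClosed hpoly.smul_mem
      (exists_pos_inner_of_forall_face_eq hCC hWC hWface),
    fun _ hy _ hx hyx => mem_setOf_inner_le_one_of_sub_mem_dualCone hWC hy hx hyx,
    fun _ hc => exists_pos_smul_mem_setOf_inner_le_one hpoly.smul_mem hWcomp.isBounded hc⟩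

/-- For a full-dimensional pointed polyhedral cone `C ⊆ C^∨` and a compact `W ⊆ C`
not contained in any proper face of `C`, the set
`K = {x ∈ C : ⟪w, x⟫ ≤ 1 ∀ w ∈ W}` is a bounded `C`-anti-blocking body which is
proper: every ray of `C` meets `K` in a nontrivial segment. -/
theorem polyhedral_Cab_representation {n : ℕ}
    {C W : Set (EuclideanSpace ℝ (Fin n))}
    (hpoly : IsPolyhedralCone C)
    (hpointed : C ∩ (-C) ⊆ {0})
    (hfull : (interior C).Nonempty)
    (hCC : C ⊆ dualCone C)
    (hWC : W ⊆ C) (hWcomp : IsCompact W)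
    (hWface : ∀ u ∈ dualCone C, (∀ w ∈ W, ⟪u, w⟫ = 0) → ∀ x ∈ C, ⟪u, x⟫ = 0) :
    Bornology.IsBounded {x ∈ C | ∀ w ∈ W, ⟪w, x⟫ ≤ 1} ∧
      (∀ y ∈ {x ∈ C | ∀ w ∈ W, ⟪w, x⟫ ≤ 1}, ∀ x ∈ C,
        y - x ∈ dualCone C → x ∈ {x ∈ C | ∀ w ∈ W, ⟪w, x⟫ ≤ 1}) ∧
      ∀ c ∈ C, ∃ μ : ℝ, 0 < μ ∧ μ • c ∈ {x ∈ C | ∀ w ∈ W, ⟪w, x⟫ ≤ 1} :=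
  polyhedral_Cab_representation_general hpoly hCC hWC hWcomp hWface
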